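/- arXiv:2105.03167 — 2 statements merged into one kernel-verified Lean document; each statement's English description precedes it below -/
import Mathlib

section
/- Let T and T' be two Merkle trees of the same shape over leaf sequences L and L' with reduction operator hash₂, and suppose their roots are equal but L ≠ L'. Then there exists a collision for hash₂: two distinct pairs (a,b) ≠ (a',b') with hash₂(a,b) = hash₂(a',b'). -/
/-- A (Merkle) binary tree with values at the leaves. -/
inductive BTree (α : Type) : Type
  | leaf (a : α) : BTree α
  | node (l r : BTree α) : BTree α

/-- The shape of a binary tree (the underlying tree, forgetting leaf values). -/
def BTree.shape {α : Type} : BTree α → BTree Unit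
  | .leaf _ => .leaf ()
  | .node l r => .node l.shape r.shape

/-- The Merkle root of a tree with reduction operator `h` (`hash₂`):
the root of a leaf is the leaf value, and the root of a node with subtree
roots `a`, `b` is `hash₂ (a ∥ b)`. -/
def BTree.root {α : Type} (h : α → α → α) : BTree α → α
  | .leaf a => a
  | .node l r => h (l.root h) (r.root h)

/-- The leaf sequence of a tree (left-to-right). -/
def BTree.leaves {α : Type} : BTree α → List α
  | .leaf a => [a]
  | .node l r => l.leaves ++ r.leaves

/-- Merkle binding: if two Merkle trees of the same shape over leaf
sequences `L ≠ L'` have equal roots, then there is a collision for `hash₂`: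
two distinct pairs `(a, b) ≠ (a', b')` with `hash₂(a,b) = hash₂(a',b')`. -/
theorem merkle_binding {α : Type} (h : α → α → α) (t t' : BTree α)
    (hshape : t.shape = t'.shape)
    (hroot : t.root h = t'.root h)
    (hleaves : t.leaves ≠ t'.leaves) :
    ∃ a b a' b' : α, (a, b) ≠ (a', b') ∧ h a b = h a' b' := by
  induction t generalizing t' with
  | leaf a =>
    cases t' with
    | leaf a' =>
      exact absurd (by simpa [BTree.leaves, BTree.root] using hroot) hleaves
    | node l' r' => simp [BTree.shape] at hshape
  | node l r ihl ihr =>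
    cases t' with
    | leaf a' => simp [BTree.shape] at hshape
    | node l' r' =>
      simp only [BTree.shape, BTree.node.injEq] at hshape
      by_cases hpair : (l.root h, r.root h) = (l'.root h, r'.root h)
      · obtain ⟨h1, h2⟩ := Prod.mk.injEq .. ▸ hpair
        by_cases hll : l.leaves = l'.leaves
        · exact ihr r' hshape.2 h2 (fun hr =>
            hleaves (by simp [BTree.leaves, hll, hr]))
        · exact ihl l' hshape.1 h1 hll
      · exact ⟨_, _, _, _, hpair, hroot⟩
end

section
/- If an adversary can forge a valid authentication path for a leaf value v' at leaf position i of a Merkle tree whose root was computed from a leaf sequence with value v ≠ v' at position i, then the adversary's transcript yields a collision for hash₂. -/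
/-- Recompute a Merkle root from a leaf value by folding `hash₂` along an
authentication path: each path entry is a direction bit together with the
sibling value (`true` means the sibling is on the left). -/
def foldPath {α : Type} (h : α → α → α) : α → List (Bool × α) → α
  | v, [] => v
  | v, (b, s) :: rest => foldPath h (if b then h s v else h v s) rest

/-- If the honest Merkle tree has root `Troot`, obtained from the honest
authentication path `p` for the true leaf value `v` at position `i` (encoded
by the direction bits of `p`), and an adversary forges a valid
authentication path `p'` for a different leaf value `v' ≠ v` at the same
position (same direction bits) that also folds to `Troot`, then the
transcript yields a collision for `hash₂`: distinct inputs with equal hash. -/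
theorem forged_authPath_yields_collision {α : Type} (h : α → α → α)
    (v v' Troot : α) (p p' : List (Bool × α))
    (hne : v ≠ v')
    (hpos : p.map Prod.fst = p'.map Prod.fst)
    (hp : foldPath h v p = Troot)
    (hp' : foldPath h v' p' = Troot) :
    ∃ a b a' b' : α, (a, b) ≠ (a', b') ∧ h a b = h a' b' := by
  induction p generalizing v v' p' Troot with
  | nil =>
    cases p' with
    | nil => simp [foldPath] at hp hp'; exact absurd (hp.trans hp'.symm) hne
    | cons x t => simp at hpos
  | cons x t ih =>
    obtain ⟨b, s⟩ := x
    cases p' with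
    | nil => simp at hpos
    | cons x' t' =>
      obtain ⟨b', s'⟩ := x'
      simp at hpos
      obtain ⟨hb, ht⟩ := hpos
      subst hb
      simp [foldPath] at hp hp'
      by_cases heq : (if b then h s v else h v s) = (if b then h s' v' else h v' s')
      · cases b with
        | true =>
          simp at heq
          refine ⟨s, v, s', v', ?_, heq⟩
          simp only [Ne, Prod.mk.injEq, not_and]
          intro _ hvv'; exact absurd hvv' hne
        | false =>
          simp at heq
          refine ⟨v, s, v', s', ?_, heq⟩
          simp only [Ne, Prod.mk.injEq, not_and]
          intro hvv'; exact absurd hvv' hne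
      · cases b with
        | true =>
          simp at heq hp hp'
          exact ih _ _ _ _ heq ht hp hp'
        | false =>
          simp at heq hp hp'
          exact ih _ _ _ _ heq ht hp hp'
end
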